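/- Let E ⊆ ℝ^{n+1} be open and bounded, let R > 0 and let r₀ ≥ R/2. Suppose x, y ∈ E satisfy dist(x, ∂E) > r₀ and dist(y, ∂E) > r₀, and set d = |x − y| with d ≤ min{R/4, 1}. Then every point on the line segment from x to y has distance greater than r₀ − d²/R from the complement of E; that is, the segment J_{xy} is contained in E_{r₀ − d²/R} = {z ∈ E : dist(z, ∂E) > r₀ − d²/R}. -/

import Mathlib

/-! The squared distance to a fixed point w is a quadratic function along a line, so at
z = a • x + b • y on the segment it equals a |x - w|² + b |y - w|² - a b |x - y|², which is at
least r² - |x - y|² / 4 whenever x and y are at distance ≥ r from w. Taking for r the smaller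
of the distances of x and y to ∂E, which exceeds r₀, every point of the segment stays at
distance ≥ √(r² - d²/4) > √(r₀² - d²/4) from ∂E; the hypotheses
r₀ ≥ R/2 and d ≤ R/4 make this exceed r₀ - d²/R. In particular the segment avoids ∂E, and
being connected and starting in E, it lies in E. -/

open Metric Set

theorem IsPreconnected.subset_of_disjoint_frontier {X : Type*} [TopologicalSpace X]
    {s t : Set X} (hs : IsPreconnected s) (hst : (s ∩ t).Nonempty)
    (hfr : Disjoint s (frontier t)) : s ⊆ t := by
  have hcover : s ⊆ interior t ∪ (closure t)ᶜ := fun p hp => by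
    by_cases hpt : p ∈ closure t
    · exact Or.inl (by_contra fun hpi => hfr.notMem_of_mem_left hp ⟨hpt, hpi⟩)
    · exact Or.inr hpt
  obtain ⟨q, hqs, hqt⟩ := hst
  have hqi : q ∈ interior t := (hcover hqs).resolve_right (not_not.2 (subset_closure hqt))
  exact (hs.subset_left_of_subset_union isOpen_interior isClosed_closure.isOpen_compl
    (disjoint_compl_right.mono_left interior_subset_closure) hcover ⟨q, hqs, hqi⟩).trans
    interior_subset

section InnerProductSpace

variable {H : Type*} [NormedAddCommGroup H] [InnerProductSpace ℝ H]

theorem norm_smul_add_smul_sq {a b : ℝ} (hab : a + b = 1) (u v : H) :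
    ‖a • u + b • v‖ ^ 2 = a * ‖u‖ ^ 2 + b * ‖v‖ ^ 2 - a * b * ‖u - v‖ ^ 2 := by
  rw [norm_add_sq_real, norm_sub_sq_real, norm_smul, norm_smul, real_inner_smul_left,
    real_inner_smul_right, mul_pow, mul_pow, Real.norm_eq_abs, Real.norm_eq_abs, sq_abs, sq_abs]
  obtain rfl := eq_sub_of_add_eq hab
  ring

theorem sq_sub_sq_dist_div_four_le_sq_dist_of_mem_segment {x y z w : H} {r : ℝ}
    (hz : z ∈ segment ℝ x y) (hr : 0 ≤ r) (hx : r ≤ dist x w) (hy : r ≤ dist y w) :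
    r ^ 2 - dist x y ^ 2 / 4 ≤ dist z w ^ 2 := by
  obtain ⟨a, b, ha, hb, hab, rfl⟩ := hz
  have hsplit : a • x + b • y - w = a • (x - w) + b • (y - w) := by
    have hw : w = a • w + b • w := by rw [← add_smul, hab, one_smul]
    conv_lhs => rw [hw]
    rw [smul_sub, smul_sub]
    abel
  have hdist : dist (a • x + b • y) w ^ 2
      = a * dist x w ^ 2 + b * dist y w ^ 2 - a * b * dist x y ^ 2 := by
    rw [dist_eq_norm, hsplit, norm_smul_add_smul_sq hab, sub_sub_sub_cancel_right,
      ← dist_eq_norm, ← dist_eq_norm, ← dist_eq_norm]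
  have hab4 : a * b ≤ 1 / 4 := by nlinarith [sq_nonneg (a - b)]
  rw [hdist]
  nlinarith [mul_le_mul_of_nonneg_left (pow_le_pow_left₀ hr hx 2) ha,
    mul_le_mul_of_nonneg_left (pow_le_pow_left₀ hr hy 2) hb,
    mul_le_mul_of_nonneg_right hab4 (sq_nonneg (dist x y))]

theorem lt_infDist_of_mem_segment {s : Set H} {x y z : H} {r ρ : ℝ}
    (hz : z ∈ segment ℝ x y) (hr : 0 ≤ r) (hρ : ρ ^ 2 + dist x y ^ 2 / 4 ≤ r ^ 2)
    (hx : r < infDist x s) (hy : r < infDist y s) : ρ < infDist z s := by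
  have hs : s.Nonempty := nonempty_iff_ne_empty.2 <| by
    rintro rfl
    rw [infDist_empty] at hx
    linarith
  set r₁ := min (infDist x s) (infDist y s)
  have hr₁ : r < r₁ := lt_min hx hy
  have hbound : √(r₁ ^ 2 - dist x y ^ 2 / 4) ≤ infDist z s := by
    refine (le_infDist hs).2 fun w hw => Real.sqrt_le_iff.2 ⟨dist_nonneg, ?_⟩
    exact sq_sub_sq_dist_div_four_le_sq_dist_of_mem_segment hz (hr.trans hr₁.le)
      ((min_le_left _ _).trans (infDist_le_dist_of_mem hw))
      ((min_le_right _ _).trans (infDist_le_dist_of_mem hw))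
  refine (Real.lt_sqrt_of_sq_lt ?_).trans_le hbound
  nlinarith

end InnerProductSpace

theorem sub_sq_div_nonneg_and_sq_add_sq_div_four_le {R r₀ d : ℝ} (hR : 0 < R) (hr₀ : R / 2 ≤ r₀)
    (hd₀ : 0 ≤ d) (hd : d ≤ R / 4) :
    0 ≤ r₀ - d ^ 2 / R ∧ (r₀ - d ^ 2 / R) ^ 2 + d ^ 2 / 4 ≤ r₀ ^ 2 := by
  set q := d ^ 2 / R
  have hq₀ : 0 ≤ q := by positivity
  have hRq : R * q = d ^ 2 := mul_div_cancel₀ _ hR.ne'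
  have hq : q ≤ d / 4 := by
    rw [div_le_iff₀ hR]
    nlinarith
  constructor <;> nlinarith

theorem stmt_3_general (n : ℕ) (E : Set (EuclideanSpace ℝ (Fin (n+1))))
    (R r₀ d : ℝ) (hR : 0 < R) (hr₀ : R/2 ≤ r₀)
    (x y : EuclideanSpace ℝ (Fin (n+1))) (hx : x ∈ E)
    (hxd : r₀ < Metric.infDist x (frontier E))
    (hyd : r₀ < Metric.infDist y (frontier E))
    (hd : d = dist x y) (hdle : d ≤ min (R/4) 1) :
    segment ℝ x y ⊆ {z ∈ E | r₀ - d^2/R < Metric.infDist z (frontier E)} := by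
  subst hd
  obtain ⟨hpos, hsq⟩ :=
    sub_sq_div_nonneg_and_sq_add_sq_div_four_le hR hr₀ dist_nonneg (hdle.trans (min_le_left _ _))
  have hfar : ∀ z ∈ segment ℝ x y, r₀ - dist x y ^ 2 / R < infDist z (frontier E) :=
    fun z hz => lt_infDist_of_mem_segment hz (by linarith) hsq hxd hyd
  have hinE : segment ℝ x y ⊆ E :=
    (convex_segment x y).isPreconnected.subset_of_disjoint_frontier
      ⟨x, left_mem_segment ℝ x y, hx⟩
      (disjoint_left.2 fun z hz hzE => (hfar z hz).not_ge (infDist_zero_of_mem hzE ▸ hpos))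
  exact fun z hz => ⟨hinE hz, hfar z hz⟩

theorem stmt_3 (n : ℕ) (E : Set (EuclideanSpace ℝ (Fin (n+1))))
    (hEopen : IsOpen E) (hEbdd : Bornology.IsBounded E)
    (R r₀ d : ℝ) (hR : 0 < R) (hr₀ : R/2 ≤ r₀)
    (x y : EuclideanSpace ℝ (Fin (n+1))) (hx : x ∈ E) (hy : y ∈ E)
    (hxd : r₀ < Metric.infDist x (frontier E))
    (hyd : r₀ < Metric.infDist y (frontier E))
    (hd : d = dist x y) (hdle : d ≤ min (R/4) 1) :
    segment ℝ x y ⊆ {z ∈ E | r₀ - d^2/R < Metric.infDist z (frontier E)} :=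
  stmt_3_general n E R r₀ d hR hr₀ x y hx hxd hyd hd hdle
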